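/- arXiv:math/0012042 — 5 statements merged into one kernel-verified Lean document; each statement's English description precedes it below -/
import Mathlib

section
/- Let F: R^n → R^n be smooth with invertible Jacobian F_{*u} at every point. Define φ^{ij}(u,v) = Σ_{k,l} (F_{*u}^{-1})^i_k (F_{*v}^{-1})^j_l [F^k(u) − F^l(v)]. Then φ is skew-symmetric (φ^{ij}(u,v) = −φ^{ji}(v,u)) and satisfies the classical Yang–Baxter equation: Σ_s [ φ^{ks}(w,u) ∂φ^{ij}(u,v)/∂u^s + φ^{sk}(v,w) ∂φ^{ji}(v,u)/∂v^s + φ^{is}(u,v) ∂φ^{jk}(v,w)/∂v^s + φ^{si}(w,u) ∂φ^{kj}(w,v)/∂w^s + φ^{js}(v,w) ∂φ^{ki}(w,u)/∂w^s + φ^{sj}(u,v) ∂φ^{ik}(u,w)/∂u^s ] = 0 for all i,j,k. -/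
open scoped BigOperators

/-- Jacobian matrix of `F : ℝⁿ → ℝⁿ` at `u`. -/
noncomputable def jacMat {n : ℕ} (F : (Fin n → ℝ) → (Fin n → ℝ)) (u : Fin n → ℝ) :
    Matrix (Fin n) (Fin n) ℝ :=
  Matrix.of fun i j => fderiv ℝ (fun x => F x i) u (Pi.single j 1)

/-- Partial derivative with respect to the first argument `u^s`. -/
noncomputable def D1 {n : ℕ} (f : (Fin n → ℝ) → (Fin n → ℝ) → ℝ) (s : Fin n)
    (u v : Fin n → ℝ) : ℝ :=
  fderiv ℝ (fun x => f x v) u (Pi.single s 1)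

/-- The classical Yang–Baxter expression `Φ^{ijk}(u,v,w)` for `W_n`. -/
noncomputable def CYBElhs {n : ℕ} (φ : Fin n → Fin n → (Fin n → ℝ) → (Fin n → ℝ) → ℝ)
    (i j k : Fin n) (u v w : Fin n → ℝ) : ℝ :=
  ∑ s, (φ k s w u * D1 (φ i j) s u v + φ s k v w * D1 (φ j i) s v u
      + φ i s u v * D1 (φ j k) s v w + φ s i w u * D1 (φ k j) s w v
      + φ j s v w * D1 (φ k i) s w u + φ s j u v * D1 (φ i k) s u w)

namespace CYBEAux

variable {n m : ℕ} (F : (Fin n → ℝ) → (Fin n → ℝ))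

lemma contDiff_fprod {ι : Type*} [DecidableEq ι] (s : Finset ι) (f : ι → (Fin n → ℝ) → ℝ)
    (h : ∀ i ∈ s, ContDiff ℝ (⊤ : ℕ∞) (f i)) : ContDiff ℝ (⊤ : ℕ∞) (fun x => ∏ i ∈ s, f i x) := by
  induction s using Finset.induction with
  | empty => simpa using contDiff_const
  | insert _ _ hx ih =>
    rename_i a t
    simp only [Finset.prod_insert hx]
    exact (h a (Finset.mem_insert_self a t)).mul (ih fun i hi => h i (Finset.mem_insert_of_mem hi))

lemma contDiff_det (M : (Fin n → ℝ) → Matrix (Fin m) (Fin m) ℝ)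
    (h : ∀ i j, ContDiff ℝ (⊤ : ℕ∞) fun u => M u i j) : ContDiff ℝ (⊤ : ℕ∞) fun u => (M u).det := by
  simp only [Matrix.det_apply, Units.smul_def, zsmul_eq_mul]
  refine ContDiff.sum fun σ _ => ?_
  exact contDiff_const.mul (contDiff_fprod _ _ fun i _ => h (σ i) i)

lemma contDiff_adj (M : (Fin n → ℝ) → Matrix (Fin m) (Fin m) ℝ)
    (h : ∀ i j, ContDiff ℝ (⊤ : ℕ∞) fun u => M u i j) (i j : Fin m) :
    ContDiff ℝ (⊤ : ℕ∞) fun u => (M u).adjugate i j := by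
  simp only [Matrix.adjugate_apply]
  refine contDiff_det (fun u => (M u).updateRow j (Pi.single i 1)) fun p q => ?_
  rcases eq_or_ne p j with rfl | hpj
  · simpa [Matrix.updateRow_apply] using contDiff_const
  · simpa [Matrix.updateRow_apply, hpj] using h p q

lemma contDiff_jac (hF : ContDiff ℝ (⊤ : ℕ∞) F) (i j : Fin n) :
    ContDiff ℝ (⊤ : ℕ∞) fun u => jacMat F u i j := by
  have h1 : ContDiff ℝ (⊤ : ℕ∞) fun x => F x i := (contDiff_pi.mp hF) i
  exact (h1.fderiv_right (by simp)).clm_apply contDiff_const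

lemma diff_jac (hF : ContDiff ℝ (⊤ : ℕ∞) F) (i j : Fin n) (u : Fin n → ℝ) :
    DifferentiableAt ℝ (fun x => jacMat F x i j) u :=
  ((contDiff_jac F hF i j).differentiable (by simp)).differentiableAt

lemma diff_Ainv (hF : ContDiff ℝ (⊤ : ℕ∞) F) (hinv : ∀ u, IsUnit (jacMat F u).det)
    (u : Fin n → ℝ) (i k : Fin n) :
    DifferentiableAt ℝ (fun x => (jacMat F x)⁻¹ i k) u := by
  have heq : (fun x => (jacMat F x)⁻¹ i k)
      = fun x => ((jacMat F x).det)⁻¹ * (jacMat F x).adjugate i k := by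
    funext x
    rw [Matrix.inv_def, Matrix.smul_apply, Ring.inverse_eq_inv, smul_eq_mul]
  rw [heq]
  have hdet : (jacMat F u).det ≠ 0 := (hinv u).ne_zero
  exact ((((contDiff_det _ (contDiff_jac F hF)).contDiffAt).inv hdet).mul
    (contDiff_adj _ (contDiff_jac F hF) i k).contDiffAt).differentiableAt (by simp)

/-- `a^i(u) = ∑_k (F_{*u}^{-1})^i_k F^k(u)`. -/
noncomputable def av (i : Fin n) (u : Fin n → ℝ) : ℝ := ∑ k, (jacMat F u)⁻¹ i k * F u k

/-- `b^i(u) = ∑_k (F_{*u}^{-1})^i_k`. -/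
noncomputable def bv (i : Fin n) (u : Fin n → ℝ) : ℝ := ∑ k, (jacMat F u)⁻¹ i k

/-- directional derivative of `a^i` at `u` in direction `e_s`. -/
noncomputable def da (i s : Fin n) (u : Fin n → ℝ) : ℝ :=
  fderiv ℝ (av F i) u (Pi.single s 1)

/-- directional derivative of `b^i` at `u` in direction `e_s`. -/
noncomputable def db (i s : Fin n) (u : Fin n → ℝ) : ℝ :=
  fderiv ℝ (bv F i) u (Pi.single s 1)

/-- directional derivative of the Jacobian entry `J_{pq}` at `u` in direction `e_s`. -/
noncomputable def dJ (p q s : Fin n) (u : Fin n → ℝ) : ℝ :=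
  fderiv ℝ (fun x => jacMat F x p q) u (Pi.single s 1)

lemma dJ_symm (hF : ContDiff ℝ (⊤ : ℕ∞) F) (p q s : Fin n) (u : Fin n → ℝ) :
    dJ F p q s u = dJ F p s q u := by
  have hf : ContDiff ℝ (⊤ : ℕ∞) fun x => F x p := (contDiff_pi.mp hF) p
  have hd : DifferentiableAt ℝ (fderiv ℝ fun x => F x p) u :=
    ((hf.fderiv_right (m := 1) (by exact WithTop.coe_le_coe.mpr le_top)).differentiable (by simp)).differentiableAt
  have key : ∀ q s : Fin n, dJ F p q s u =
      fderiv ℝ (fderiv ℝ fun x => F x p) u (Pi.single s 1) (Pi.single q 1) := by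
    intro q s
    have heq : (fun x => jacMat F x p q) = fun x =>
        (fderiv ℝ (fun y => F y p) x) ((fun _ => (Pi.single q 1 : Fin n → ℝ)) x) := rfl
    rw [dJ, heq, fderiv_clm_apply hd (differentiableAt_const _)]
    simp
  rw [key, key]
  exact hf.contDiffAt.isSymmSndFDerivAt (by simp; exact WithTop.coe_le_coe.mpr le_top) _ _

lemma diff_av (hF : ContDiff ℝ (⊤ : ℕ∞) F) (hinv : ∀ u, IsUnit (jacMat F u).det)
    (i : Fin n) (u : Fin n → ℝ) : DifferentiableAt ℝ (av F i) u := by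
  unfold av
  exact DifferentiableAt.fun_sum fun k _ => (diff_Ainv F hF hinv u i k).mul
    (((contDiff_pi.mp hF) k).differentiable (by simp)).differentiableAt

lemma diff_bv (hF : ContDiff ℝ (⊤ : ℕ∞) F) (hinv : ∀ u, IsUnit (jacMat F u).det)
    (i : Fin n) (u : Fin n → ℝ) : DifferentiableAt ℝ (bv F i) u := by
  unfold bv
  exact DifferentiableAt.fun_sum fun k _ => diff_Ainv F hF hinv u i k

lemma JA_entry (hinv : ∀ u, IsUnit (jacMat F u).det) (u : Fin n → ℝ) (p m : Fin n) :
    ∑ k, jacMat F u p k * (jacMat F u)⁻¹ k m = if p = m then 1 else 0 := by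
  have h := Matrix.mul_nonsing_inv _ (hinv u)
  have h2 := congrFun (congrFun h p) m
  rw [Matrix.mul_apply] at h2
  simpa [Matrix.one_apply] using h2

lemma AJ_entry (hinv : ∀ u, IsUnit (jacMat F u).det) (u : Fin n → ℝ) (p m : Fin n) :
    ∑ k, (jacMat F u)⁻¹ p k * jacMat F u k m = if p = m then 1 else 0 := by
  have h := Matrix.nonsing_inv_mul _ (hinv u)
  have h2 := congrFun (congrFun h p) m
  rw [Matrix.mul_apply] at h2
  simpa [Matrix.one_apply] using h2

lemma Ja (hinv : ∀ u, IsUnit (jacMat F u).det) (p : Fin n) (u : Fin n → ℝ) :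
    ∑ k, jacMat F u p k * av F k u = F u p := by
  unfold av
  simp only [Finset.mul_sum]
  rw [Finset.sum_comm]
  have h : ∀ m : Fin n, ∑ k, jacMat F u p k * ((jacMat F u)⁻¹ k m * F u m)
      = (if p = m then 1 else 0) * F u m := by
    intro m
    rw [← JA_entry F hinv u p m, Finset.sum_mul]
    exact Finset.sum_congr rfl fun k _ => by ring
  simp only [h]
  simp [Finset.sum_ite_eq]

lemma Jb (hinv : ∀ u, IsUnit (jacMat F u).det) (p : Fin n) (u : Fin n → ℝ) :
    ∑ k, jacMat F u p k * bv F k u = 1 := by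
  unfold bv
  simp only [Finset.mul_sum]
  rw [Finset.sum_comm]
  have h : ∀ m : Fin n, ∑ k, jacMat F u p k * (jacMat F u)⁻¹ k m
      = if p = m then 1 else 0 := JA_entry F hinv u p
  simp only [h]
  simp [Finset.sum_ite_eq]

lemma fderiv_sum_mul_apply (g h : Fin n → (Fin n → ℝ) → ℝ) (u w : Fin n → ℝ)
    (hg : ∀ k, DifferentiableAt ℝ (g k) u) (hh : ∀ k, DifferentiableAt ℝ (h k) u) :
    fderiv ℝ (fun x => ∑ k, g k x * h k x) u w
      = ∑ k, (fderiv ℝ (g k) u w * h k u + g k u * fderiv ℝ (h k) u w) := by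
  rw [fderiv_fun_sum (A := fun k x => g k x * h k x) (fun k _ => (hg k).mul (hh k)), ContinuousLinearMap.sum_apply]
  refine Finset.sum_congr rfl fun k _ => ?_
  rw [fderiv_fun_mul (hg k) (hh k)]
  simp only [ContinuousLinearMap.add_apply, ContinuousLinearMap.smul_apply, smul_eq_mul]
  ring

lemma sumJda (hF : ContDiff ℝ (⊤ : ℕ∞) F) (hinv : ∀ u, IsUnit (jacMat F u).det)
    (p s : Fin n) (u : Fin n → ℝ) :
    ∑ k, jacMat F u p k * da F k s u
      = jacMat F u p s - ∑ k, dJ F p k s u * av F k u := by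
  have hfun : (fun x => ∑ k, jacMat F x p k * av F k x) = fun x => F x p :=
    funext fun x => Ja F hinv p x
  have h2 : fderiv ℝ (fun x => ∑ k, jacMat F x p k * av F k x) u (Pi.single s 1)
      = jacMat F u p s := by rw [hfun]; rfl
  rw [fderiv_sum_mul_apply (fun k x => jacMat F x p k) (fun k => av F k) u (Pi.single s 1)
    (fun k => diff_jac F hF p k u) (fun k => diff_av F hF hinv k u)] at h2
  have h3 : ∑ k, (dJ F p k s u * av F k u + jacMat F u p k * da F k s u)
      = jacMat F u p s := h2
  rw [Finset.sum_add_distrib] at h3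
  linarith

lemma sumJdb (hF : ContDiff ℝ (⊤ : ℕ∞) F) (hinv : ∀ u, IsUnit (jacMat F u).det)
    (p s : Fin n) (u : Fin n → ℝ) :
    ∑ k, jacMat F u p k * db F k s u = -∑ k, dJ F p k s u * bv F k u := by
  have hfun : (fun x => ∑ k, jacMat F x p k * bv F k x) = fun _ => (1:ℝ) :=
    funext fun x => Jb F hinv p x
  have h2 : fderiv ℝ (fun x => ∑ k, jacMat F x p k * bv F k x) u (Pi.single s 1)
      = 0 := by rw [hfun]; simp
  rw [fderiv_sum_mul_apply (fun k x => jacMat F x p k) (fun k => bv F k) u (Pi.single s 1)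
    (fun k => diff_jac F hF p k u) (fun k => diff_bv F hF hinv k u)] at h2
  have h3 : ∑ k, (dJ F p k s u * bv F k u + jacMat F u p k * db F k s u) = 0 := h2
  rw [Finset.sum_add_distrib] at h3
  linarith

lemma recover (x : Fin n → ℝ) (A J : Matrix (Fin n) (Fin n) ℝ)
    (hAJ : ∀ p m, ∑ k, A p k * J k m = if p = m then 1 else 0) (i s : Fin n) :
    x i = ∑ p, A i p * ∑ k, J p k * x k := by
  calc x i = ∑ k, (if i = k then (1:ℝ) else 0) * x k := by
        simp [ite_mul, Finset.sum_ite_eq]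
    _ = ∑ k, (∑ p, A i p * J p k) * x k := by
        refine Finset.sum_congr rfl fun k _ => ?_
        rw [hAJ i k]
    _ = ∑ k, ∑ p, A i p * (J p k * x k) := by
        refine Finset.sum_congr rfl fun k _ => ?_
        rw [Finset.sum_mul]
        exact Finset.sum_congr rfl fun p _ => by ring
    _ = ∑ p, A i p * ∑ k, J p k * x k := by
        rw [Finset.sum_comm]
        simp [Finset.mul_sum]

lemma da_eq (hF : ContDiff ℝ (⊤ : ℕ∞) F) (hinv : ∀ u, IsUnit (jacMat F u).det)
    (i s : Fin n) (u : Fin n → ℝ) :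
    da F i s u = (if i = s then 1 else 0)
      - ∑ p, (jacMat F u)⁻¹ i p * ∑ k, dJ F p k s u * av F k u := by
  have h0 : da F i s u = ∑ p, (jacMat F u)⁻¹ i p * ∑ k, jacMat F u p k * da F k s u :=
    recover (fun k => da F k s u) ((jacMat F u)⁻¹) (jacMat F u) (AJ_entry F hinv u) i s
  rw [h0]
  simp only [sumJda F hF hinv _ s u, mul_sub, Finset.sum_sub_distrib]
  rw [AJ_entry F hinv u i s]

lemma db_eq (hF : ContDiff ℝ (⊤ : ℕ∞) F) (hinv : ∀ u, IsUnit (jacMat F u).det)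
    (i s : Fin n) (u : Fin n → ℝ) :
    db F i s u = -∑ p, (jacMat F u)⁻¹ i p * ∑ k, dJ F p k s u * bv F k u := by
  have h0 : db F i s u = ∑ p, (jacMat F u)⁻¹ i p * ∑ k, jacMat F u p k * db F k s u :=
    recover (fun k => db F k s u) ((jacMat F u)⁻¹) (jacMat F u) (AJ_entry F hinv u) i s
  rw [h0]
  simp only [sumJdb F hF hinv _ s u, mul_neg, Finset.sum_neg_distrib]

/-- The key bracket identity `[E, Y] = E`. -/
lemma key (hF : ContDiff ℝ (⊤ : ℕ∞) F) (hinv : ∀ u, IsUnit (jacMat F u).det)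
    (i : Fin n) (u : Fin n → ℝ) :
    ∑ s, (bv F s u * da F i s u - av F s u * db F i s u) = bv F i u := by
  simp only [da_eq F hF hinv i, db_eq F hF hinv i]
  have step : ∀ s, bv F s u * ((if i = s then (1:ℝ) else 0)
        - ∑ p, (jacMat F u)⁻¹ i p * ∑ k, dJ F p k s u * av F k u)
      - av F s u * (-∑ p, (jacMat F u)⁻¹ i p * ∑ k, dJ F p k s u * bv F k u)
      = bv F s u * (if i = s then 1 else 0)
      - (bv F s u * ∑ p, (jacMat F u)⁻¹ i p * ∑ k, dJ F p k s u * av F k u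
        - av F s u * ∑ p, (jacMat F u)⁻¹ i p * ∑ k, dJ F p k s u * bv F k u) := by
    intro s; ring
  simp only [step]
  rw [Finset.sum_sub_distrib]
  have h1 : ∑ s, bv F s u * (if i = s then (1:ℝ) else 0) = bv F i u := by
    simp [mul_ite, Finset.sum_ite_eq']
  rw [h1]
  have h2 : ∑ s, (bv F s u * ∑ p, (jacMat F u)⁻¹ i p * ∑ k, dJ F p k s u * av F k u
      - av F s u * ∑ p, (jacMat F u)⁻¹ i p * ∑ k, dJ F p k s u * bv F k u) = 0 := by
    have reorg : ∀ (x y : Fin n → (Fin n → ℝ) → ℝ),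
        ∑ s, x s u * ∑ p, (jacMat F u)⁻¹ i p * ∑ k, dJ F p k s u * y k u
        = ∑ p, (jacMat F u)⁻¹ i p * ∑ s, ∑ k, x s u * (dJ F p k s u * y k u) := by
      intro x y
      simp only [Finset.mul_sum]
      rw [Finset.sum_comm]
      refine Finset.sum_congr rfl fun p _ => Finset.sum_congr rfl fun s _ => ?_
      exact Finset.sum_congr rfl fun k _ => by ring
    rw [Finset.sum_sub_distrib, reorg, reorg]
    rw [sub_eq_zero]
    refine Finset.sum_congr rfl fun p _ => ?_
    congr 1
    rw [Finset.sum_comm]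
    refine Finset.sum_congr rfl fun x _ => Finset.sum_congr rfl fun y _ => ?_
    rw [dJ_symm F hF p x y u]
    ring
  rw [h2, sub_zero]

end CYBEAux

open CYBEAux in
/-- `φ^{ij}(u,v) = ∑_{k,l} (F_{*u}^{-1})^i_k (F_{*v}^{-1})^j_l [F^k(u) − F^l(v)]`
is skew-symmetric and solves the classical Yang–Baxter equation. -/
theorem cybe_solution_from_map {n : ℕ} (F : (Fin n → ℝ) → (Fin n → ℝ))
    (hF : ContDiff ℝ (⊤ : ℕ∞) F) (hinv : ∀ u, IsUnit (jacMat F u).det) :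
    let φ : Fin n → Fin n → (Fin n → ℝ) → (Fin n → ℝ) → ℝ := fun i j u v =>
      ∑ k, ∑ l, (jacMat F u)⁻¹ i k * (jacMat F v)⁻¹ j l * (F u k - F v l)
    (∀ i j u v, φ i j u v = -φ j i v u) ∧
      (∀ (i j k : Fin n) (u v w : Fin n → ℝ), CYBElhs φ i j k u v w = 0) := by
  intro φ
  have hphi : φ = fun i j u v => av F i u * bv F j v - bv F i u * av F j v := by
    funext i j u v
    show ∑ k, ∑ l, (jacMat F u)⁻¹ i k * (jacMat F v)⁻¹ j l * (F u k - F v l) = _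
    have h1 : ∀ k l : Fin n, (jacMat F u)⁻¹ i k * (jacMat F v)⁻¹ j l * (F u k - F v l)
        = ((jacMat F u)⁻¹ i k * F u k) * (jacMat F v)⁻¹ j l
          - (jacMat F u)⁻¹ i k * ((jacMat F v)⁻¹ j l * F v l) := fun k l => by ring
    simp only [h1, Finset.sum_sub_distrib, ← Finset.sum_mul, ← Finset.mul_sum]
    rfl
  constructor
  · intro i j u v
    rw [hphi]
    ring
  · intro i j k u v w
    have hD1 : ∀ (i j s : Fin n) (u v : Fin n → ℝ),
        D1 (fun x y => av F i x * bv F j y - bv F i x * av F j y) s u v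
          = da F i s u * bv F j v - db F i s u * av F j v := by
      intro i j s u v
      show fderiv ℝ (fun x => av F i x * bv F j v - bv F i x * av F j v) u (Pi.single s 1) = _
      rw [fderiv_fun_sub ((diff_av F hF hinv i u).mul_const _) ((diff_bv F hF hinv i u).mul_const _),
        fderiv_mul_const (diff_av F hF hinv i u), fderiv_mul_const (diff_bv F hF hinv i u)]
      simp only [ContinuousLinearMap.sub_apply, ContinuousLinearMap.smul_apply, smul_eq_mul]
      show bv F j v * da F i s u - av F j v * db F i s u = _
      ring
    rw [hphi, CYBElhs]
    simp only [hD1]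
    have expand : ∀ s : Fin n,
        (av F k w * bv F s u - bv F k w * av F s u) * (da F i s u * bv F j v - db F i s u * av F j v)
        + (av F s v * bv F k w - bv F s v * av F k w) * (da F j s v * bv F i u - db F j s v * av F i u)
        + (av F i u * bv F s v - bv F i u * av F s v) * (da F j s v * bv F k w - db F j s v * av F k w)
        + (av F s w * bv F i u - bv F s w * av F i u) * (da F k s w * bv F j v - db F k s w * av F j v)
        + (av F j v * bv F s w - bv F j v * av F s w) * (da F k s w * bv F i u - db F k s w * av F i u)
        + (av F s u * bv F j v - bv F s u * av F j v) * (da F i s u * bv F k w - db F i s u * av F k w)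
        = (av F k w * bv F j v - bv F k w * av F j v)
            * (bv F s u * da F i s u - av F s u * db F i s u)
          + (av F i u * bv F k w - bv F i u * av F k w)
            * (bv F s v * da F j s v - av F s v * db F j s v)
          + (av F j v * bv F i u - bv F j v * av F i u)
            * (bv F s w * da F k s w - av F s w * db F k s w) := by
      intro s; ring
    simp only [expand]
    rw [Finset.sum_add_distrib, Finset.sum_add_distrib, ← Finset.mul_sum, ← Finset.mul_sum,
      ← Finset.mul_sum, key F hF hinv i u, key F hF hinv j v, key F hF hinv k w]
    ring
end

section
/- Let Ψ^i, Θ^i: R^n → R (i = 1,…,n) be smooth functions and α, β ∈ R such that Σ_s Ψ^s(u) ∂Θ^i/∂u^s − Σ_s Θ^s(u) ∂Ψ^i/∂u^s = α Θ^i(u) + β Ψ^i(u) for all i and u. Then φ^{ij}(u,v) := Θ^i(u)Ψ^j(v) − Θ^j(v)Ψ^i(u) is a skew-symmetric solution of the classical Yang–Baxter equation for W_n: Σ_s [ φ^{ks}(w,u) ∂φ^{ij}(u,v)/∂u^s + φ^{sk}(v,w) ∂φ^{ji}(v,u)/∂v^s + φ^{is}(u,v) ∂φ^{jk}(v,w)/∂v^s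 + φ^{si}(w,u) ∂φ^{kj}(w,v)/∂w^s + φ^{js}(v,w) ∂φ^{ki}(w,u)/∂w^s + φ^{sj}(u,v) ∂φ^{ik}(u,w)/∂u^s ] = 0. -/
open scoped BigOperators

/-- Partial derivative `∂f/∂u^s`. -/
noncomputable def pd {n : ℕ} (s : Fin n) (f : (Fin n → ℝ) → ℝ) (u : Fin n → ℝ) : ℝ :=
  fderiv ℝ f u (Pi.single s 1)

lemma D1_phi {n : ℕ} (f g : (Fin n → ℝ) → ℝ) (hf : Differentiable ℝ f)
    (hg : Differentiable ℝ g) (a b : ℝ) (s : Fin n) (u : Fin n → ℝ) :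
    fderiv ℝ (fun x => f x * a - b * g x) u (Pi.single s 1) = pd s f u * a - b * pd s g u := by
  rw [fderiv_fun_sub ((hf u).mul_const a) ((hg u).const_mul b), fderiv_mul_const (hf u),
    fderiv_const_mul (hg u)]
  simp [pd, smul_eq_mul]
  ring

/-- If `[Ψ,Θ] = αΘ + βΨ` then `φ^{ij}(u,v) = Θ^i(u)Ψ^j(v) − Θ^j(v)Ψ^i(u)` is a
skew-symmetric solution of the CYBE for `W_n`. -/
theorem cybe_solution_rank_two {n : ℕ} (Ψ Θ : Fin n → (Fin n → ℝ) → ℝ) (α β : ℝ)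
    (hΨ : ∀ i, ContDiff ℝ (⊤ : ℕ∞) (Ψ i)) (hΘ : ∀ i, ContDiff ℝ (⊤ : ℕ∞) (Θ i))
    (hbr : ∀ (i : Fin n) (u : Fin n → ℝ),
      (∑ s, Ψ s u * pd s (Θ i) u) - (∑ s, Θ s u * pd s (Ψ i) u) = α * Θ i u + β * Ψ i u) :
    let φ : Fin n → Fin n → (Fin n → ℝ) → (Fin n → ℝ) → ℝ := fun i j u v =>
      Θ i u * Ψ j v - Θ j v * Ψ i u
    (∀ i j u v, φ i j u v = -φ j i v u) ∧
      (∀ (i j k : Fin n) (u v w : Fin n → ℝ), CYBElhs φ i j k u v w = 0) := by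
  intro φ
  have hD : ∀ (a b s : Fin n) (x y : Fin n → ℝ),
      D1 (φ a b) s x y = pd s (Θ a) x * Ψ b y - Θ b y * pd s (Ψ a) x := by
    intro a b s x y
    exact D1_phi (Θ a) (Ψ a) ((hΘ a).differentiable (by simp)) ((hΨ a).differentiable (by simp))
      (Ψ b y) (Θ b y) s x
  constructor
  · intro i j u v
    show Θ i u * Ψ j v - Θ j v * Ψ i u = -(Θ j v * Ψ i u - Θ i u * Ψ j v)
    ring
  · intro i j k u v w
    have hφ : ∀ (a b : Fin n) (x y : Fin n → ℝ), φ a b x y = Θ a x * Ψ b y - Θ b y * Ψ a x :=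
      fun _ _ _ _ => rfl
    rw [CYBElhs]
    simp only [hD, hφ]
    rw [show (∑ s, ((Θ k w * Ψ s u - Θ s u * Ψ k w) * (pd s (Θ i) u * Ψ j v - Θ j v * pd s (Ψ i) u)
        + (Θ s v * Ψ k w - Θ k w * Ψ s v) * (pd s (Θ j) v * Ψ i u - Θ i u * pd s (Ψ j) v)
        + (Θ i u * Ψ s v - Θ s v * Ψ i u) * (pd s (Θ j) v * Ψ k w - Θ k w * pd s (Ψ j) v)
        + (Θ s w * Ψ i u - Θ i u * Ψ s w) * (pd s (Θ k) w * Ψ j v - Θ j v * pd s (Ψ k) w)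
        + (Θ j v * Ψ s w - Θ s w * Ψ j v) * (pd s (Θ k) w * Ψ i u - Θ i u * pd s (Ψ k) w)
        + (Θ s u * Ψ j v - Θ j v * Ψ s u) * (pd s (Θ i) u * Ψ k w - Θ k w * pd s (Ψ i) u)))
      = (∑ s, Ψ s u * pd s (Θ i) u) * (Θ k w * Ψ j v - Θ j v * Ψ k w)
        + (∑ s, Θ s u * pd s (Ψ i) u) * (Θ j v * Ψ k w - Θ k w * Ψ j v)
        + (∑ s, Ψ s v * pd s (Θ j) v) * (Θ i u * Ψ k w - Θ k w * Ψ i u)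
        + (∑ s, Θ s v * pd s (Ψ j) v) * (Θ k w * Ψ i u - Θ i u * Ψ k w)
        + (∑ s, Ψ s w * pd s (Θ k) w) * (Θ j v * Ψ i u - Θ i u * Ψ j v)
        + (∑ s, Θ s w * pd s (Ψ k) w) * (Θ i u * Ψ j v - Θ j v * Ψ i u) from by
      simp only [Finset.sum_mul, ← Finset.sum_add_distrib]
      exact Finset.sum_congr rfl fun s _ => by ring]
    linear_combination (Θ k w * Ψ j v - Θ j v * Ψ k w) * hbr i u
      + (Θ i u * Ψ k w - Θ k w * Ψ i u) * hbr j v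
      + (Θ j v * Ψ i u - Θ i u * Ψ j v) * hbr k w
end

section
/- Let φ^{ij}(u,v) be skew-symmetric (φ^{ij}(u,v) = −φ^{ji}(v,u)) smooth functions solving the classical Yang–Baxter equation for W_n. Then α^{ij}(u) := −φ^{ij}(u,u) is a Poisson bivector on R^n: it is antisymmetric and satisfies the Jacobi identity Σ_s [ α^{ks}(u) ∂α^{ij}/∂u^s + α^{is}(u) ∂α^{jk}/∂u^s + α^{js}(u) ∂α^{ki}/∂u^s ] = 0. -/
open scoped BigOperators

/-- Partial derivative with respect to the second argument. -/
noncomputable def D2 {n : ℕ} (f : (Fin n → ℝ) → (Fin n → ℝ) → ℝ) (s : Fin n)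
    (u v : Fin n → ℝ) : ℝ :=
  fderiv ℝ (fun y => f u y) v (Pi.single s 1)

/-- Chain rule on the diagonal: the derivative of `x ↦ f x x` is the sum of partials. -/
lemma pd_diag {n : ℕ} (f : (Fin n → ℝ) → (Fin n → ℝ) → ℝ) (s : Fin n) (u : Fin n → ℝ)
    (hf : DifferentiableAt ℝ (fun p : (Fin n → ℝ) × (Fin n → ℝ) => f p.1 p.2)
      ((u, u) : (Fin n → ℝ) × (Fin n → ℝ))) :
    pd s (fun x => f x x) u = D1 f s u u + D2 f s u u := by
  set F : (Fin n → ℝ) × (Fin n → ℝ) → ℝ := fun p => f p.1 p.2 with hF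
  set Df := fderiv ℝ F (u, u) with hDf
  have hF' : HasFDerivAt F Df (u, u) := hf.hasFDerivAt
  have g1 : HasFDerivAt (fun x : Fin n → ℝ => ((x, x) : (Fin n → ℝ) × (Fin n → ℝ)))
      ((ContinuousLinearMap.id ℝ (Fin n → ℝ)).prod (ContinuousLinearMap.id ℝ (Fin n → ℝ))) u :=
    HasFDerivAt.prodMk (hasFDerivAt_id u) (hasFDerivAt_id u)
  have g2 : HasFDerivAt (fun x : Fin n → ℝ => ((x, u) : (Fin n → ℝ) × (Fin n → ℝ)))
      ((ContinuousLinearMap.id ℝ (Fin n → ℝ)).prod 0) u :=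
    HasFDerivAt.prodMk (hasFDerivAt_id u) (hasFDerivAt_const u u)
  have g3 : HasFDerivAt (fun y : Fin n → ℝ => ((u, y) : (Fin n → ℝ) × (Fin n → ℝ)))
      (((0 : (Fin n → ℝ) →L[ℝ] (Fin n → ℝ))).prod (ContinuousLinearMap.id ℝ (Fin n → ℝ))) u :=
    HasFDerivAt.prodMk (hasFDerivAt_const u u) (hasFDerivAt_id u)
  have h1 : HasFDerivAt (F ∘ fun x : Fin n → ℝ => (x, x))
      (Df.comp ((ContinuousLinearMap.id ℝ (Fin n → ℝ)).prod
        (ContinuousLinearMap.id ℝ (Fin n → ℝ)))) u := HasFDerivAt.comp u (hf := g1) (hg := hF')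
  have h2 : HasFDerivAt (F ∘ fun x : Fin n → ℝ => (x, u))
      (Df.comp ((ContinuousLinearMap.id ℝ (Fin n → ℝ)).prod 0)) u := HasFDerivAt.comp u (hf := g2) (hg := hF')
  have h3 : HasFDerivAt (F ∘ fun y : Fin n → ℝ => (u, y))
      (Df.comp (((0 : (Fin n → ℝ) →L[ℝ] (Fin n → ℝ))).prod
        (ContinuousLinearMap.id ℝ (Fin n → ℝ)))) u := HasFDerivAt.comp u (hf := g3) (hg := hF')
  have e1 : fderiv ℝ (fun x : Fin n → ℝ => f x x) u = _ :=
    (show (fun x : Fin n → ℝ => f x x) = F ∘ (fun x => (x, x)) from rfl) ▸ h1.fderiv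
  have e2 : fderiv ℝ (fun x : Fin n → ℝ => f x u) u = _ :=
    (show (fun x : Fin n → ℝ => f x u) = F ∘ (fun x => (x, u)) from rfl) ▸ h2.fderiv
  have e3 : fderiv ℝ (fun y : Fin n → ℝ => f u y) u = _ :=
    (show (fun y : Fin n → ℝ => f u y) = F ∘ (fun y => (u, y)) from rfl) ▸ h3.fderiv
  simp only [pd, D1, D2, e1, e2, e3]
  have hsplit : (Pi.single s 1, Pi.single s 1) =
      ((Pi.single s 1, 0) : (Fin n → ℝ) × (Fin n → ℝ)) + (0, Pi.single s 1) := by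
    simp
  simp only [ContinuousLinearMap.comp_apply, ContinuousLinearMap.prod_apply,
    ContinuousLinearMap.id_apply, ContinuousLinearMap.zero_apply]
  rw [show ((Pi.single s 1 : Fin n → ℝ), (Pi.single s 1 : Fin n → ℝ)) =
      ((Pi.single s 1, 0) : (Fin n → ℝ) × (Fin n → ℝ)) + (0, Pi.single s 1) by simp,
    Df.map_add]

/-- If `φ` is a skew-symmetric smooth solution of the CYBE for `W_n`, then
`α^{ij}(u) = −φ^{ij}(u,u)` is a Poisson bivector on `ℝⁿ`. -/
theorem diagonal_poisson_bivector {n : ℕ}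
    (φ : Fin n → Fin n → (Fin n → ℝ) → (Fin n → ℝ) → ℝ)
    (hsmooth : ∀ i j, ContDiff ℝ (⊤ : ℕ∞)
      (fun p : (Fin n → ℝ) × (Fin n → ℝ) => φ i j p.1 p.2))
    (hskew : ∀ i j u v, φ i j u v = -φ j i v u)
    (hcybe : ∀ (i j k : Fin n) (u v w : Fin n → ℝ), CYBElhs φ i j k u v w = 0) :
    let α : Fin n → Fin n → (Fin n → ℝ) → ℝ := fun i j u => -φ i j u u
    (∀ i j u, α i j u = -α j i u) ∧
      (∀ (i j k : Fin n) (u : Fin n → ℝ),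
        ∑ s, (α k s u * pd s (α i j) u + α i s u * pd s (α j k) u
          + α j s u * pd s (α k i) u) = 0) := by
  intro α
  have hdiff : ∀ (i j : Fin n) (u : Fin n → ℝ),
      DifferentiableAt ℝ (fun p : (Fin n → ℝ) × (Fin n → ℝ) => φ i j p.1 p.2) (u, u) :=
    fun i j u => ((hsmooth i j).differentiable (by simp)) (u, u)
  -- pd of α in terms of partials of φ
  have hpd : ∀ (i j : Fin n) (s : Fin n) (u : Fin n → ℝ),
      pd s (α i j) u = -(D1 (φ i j) s u u + D2 (φ i j) s u u) := by
    intro i j s u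
    have : pd s (α i j) u = -(pd s (fun x => φ i j x x) u) := by
      simp only [pd, α]
      rw [show (fun u : Fin n → ℝ => -φ i j u u) = (fun x : Fin n → ℝ => -(fun y => φ i j y y) x)
        from rfl, fderiv_fun_neg]
      simp
    rw [this, pd_diag (φ i j) s u (hdiff i j u)]
  -- skew symmetry relates D1 of transposed φ to D2
  have hS : ∀ (i j : Fin n) (s : Fin n) (u : Fin n → ℝ),
      D1 (φ j i) s u u = -(D2 (φ i j) s u u) := by
    intro i j s u
    have hfun : (fun x : Fin n → ℝ => φ j i x u) = fun x => -(fun y => φ i j u y) x := by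
      funext x; exact hskew j i x u
    simp only [D1, D2, hfun, fderiv_neg]
    simp
  constructor
  · intro i j u
    simp only [α, neg_neg]
    rw [hskew i j u u, neg_neg]
  · intro i j k u
    have key : ∀ s : Fin n,
        α k s u * pd s (α i j) u + α i s u * pd s (α j k) u + α j s u * pd s (α k i) u
        = φ k s u u * D1 (φ i j) s u u + φ s k u u * D1 (φ j i) s u u
          + φ i s u u * D1 (φ j k) s u u + φ s i u u * D1 (φ k j) s u u
          + φ j s u u * D1 (φ k i) s u u + φ s j u u * D1 (φ i k) s u u := by
      intro s
      rw [hpd i j s u, hpd j k s u, hpd k i s u, hS i j s u, hS j k s u, hS k i s u,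
        hskew s k u u, hskew s i u u, hskew s j u u]
      simp only [α]
      ring
    rw [Finset.sum_congr rfl (fun s _ => key s)]
    simpa [CYBElhs] using hcybe i j k u u u
end

section
/- Let φ_m^{μν} on R^m × R^m and φ_n^{ij} on R^n × R^n be smooth skew-symmetric functions. For a smooth map F: R^m → R^n define Π^{ij}_F(u,v) = Σ_{μ,ν} (∂F^i/∂u^μ)(u)(∂F^j/∂v^ν)(v) φ_m^{μν}(u,v) − φ_n^{ij}(F(u),F(v)). Then for diffeomorphisms X of R^m and Y of R^n, with F̄ = Y ∘ F ∘ X^{-1}, one has Π^{ij}_{F̄}(u,v) = Σ_{k,l} (Y_{*F∘X^{-1}(u)})^i_k (Y_{*F∘X^{-1}(v)})^j_l Π^{kl}_F(X^{-1}(u), X^{-1}(v)) + Σ (Y_* F_*)^i_σ (Y_* F_*)^j_ρ Ω_m^{σρ}_{X^{-1}}(u,v) + Ω_n^{ij}_Y(F∘X^{-1}(u), F∘X^{-1}(v)), where Ω_m, Ω_n are the coboundary tensors built from φ_m, φ_n as Ω^{ij}_X(u,v) = Σ (X_{*u})^i_k (X_{*v})^j_l φ^{kl}(u,v) − φ^{ij}(X(u),X(v)).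 -/
open scoped BigOperators

/-- Jacobian entry `(∂F^i/∂u^k)(u)` of a map `F : ℝᵐ → ℝⁿ`. -/
noncomputable def jac {m n : ℕ} (F : (Fin m → ℝ) → (Fin n → ℝ)) (i : Fin n) (k : Fin m)
    (u : Fin m → ℝ) : ℝ :=
  fderiv ℝ (fun x => F x i) u (Pi.single k 1)

/-- The coboundary tensor `Ω_X` on `ℝⁿ` built from `φ`. -/
noncomputable def Omega {n : ℕ} (φ : Fin n → Fin n → (Fin n → ℝ) → (Fin n → ℝ) → ℝ)
    (X : (Fin n → ℝ) → (Fin n → ℝ)) (i j : Fin n) (u v : Fin n → ℝ) : ℝ :=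
  (∑ k, ∑ l, jac X i k u * jac X j l v * φ k l u v) - φ i j (X u) (X v)

/-- The mixed tensor `Π_F` on the space of jets of maps `ℝᵐ → ℝⁿ`. -/
noncomputable def PiT {m n : ℕ} (φm : Fin m → Fin m → (Fin m → ℝ) → (Fin m → ℝ) → ℝ)
    (φn : Fin n → Fin n → (Fin n → ℝ) → (Fin n → ℝ) → ℝ)
    (F : (Fin m → ℝ) → (Fin n → ℝ)) (i j : Fin n) (u v : Fin m → ℝ) : ℝ :=
  (∑ μ, ∑ ν, jac F i μ u * jac F j ν v * φm μ ν u v) - φn i j (F u) (F v)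

/- ## Auxiliary lemmas -/

lemma jac_eq_fderiv_apply {m n : ℕ} (F : (Fin m → ℝ) → (Fin n → ℝ))
    (hF : Differentiable ℝ F) (i : Fin n) (k : Fin m) (u : Fin m → ℝ) :
    jac F i k u = fderiv ℝ F u (Pi.single k 1) i := by
  have : (fun x => F x i) = (ContinuousLinearMap.proj (R := ℝ) (φ := fun _ : Fin n => ℝ) i) ∘ F := rfl
  rw [jac, this, fderiv_comp u (ContinuousLinearMap.differentiableAt _) (hF u),
    ContinuousLinearMap.fderiv]
  rfl

/-- Chain rule for Jacobian entries. -/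
lemma jac_comp {m n p : ℕ} (G : (Fin n → ℝ) → (Fin p → ℝ)) (H : (Fin m → ℝ) → (Fin n → ℝ))
    (hG : Differentiable ℝ G) (hH : Differentiable ℝ H) (i : Fin p) (μ : Fin m) (u : Fin m → ℝ) :
    jac (G ∘ H) i μ u = ∑ k, jac G i k (H u) * jac H k μ u := by
  have h1 : jac (G ∘ H) i μ u = (fderiv ℝ G (H u) (fderiv ℝ H u (Pi.single μ 1))) i := by
    rw [jac_eq_fderiv_apply _ (hG.comp hH), fderiv_comp u (hG (H u)) (hH u)]
    rfl
  rw [h1]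
  set L := fderiv ℝ G (H u)
  set w := fderiv ℝ H u (Pi.single μ 1)
  have hw : ∀ k, w k = jac H k μ u := fun k => (jac_eq_fderiv_apply H hH k μ u).symm
  have hsingle : ∀ k : Fin n, (fun j => if k = j then (1:ℝ) else 0) = Pi.single k 1 := by
    intro k; ext j; simp [Pi.single_apply, eq_comm]
  have hexp : L w = ∑ k, w k • L (Pi.single k 1) := by
    have := LinearMap.pi_apply_eq_sum_univ (L.toLinearMap) w
    simpa [hsingle] using this
  rw [hexp]
  simp only [Finset.sum_apply, Pi.smul_apply, smul_eq_mul]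
  refine Finset.sum_congr rfl fun k _ => ?_
  rw [hw k, jac_eq_fderiv_apply G hG]
  ring

lemma swap4 {ι κ α β : Type*} [Fintype ι] [Fintype κ] [Fintype α] [Fintype β]
    (t : ι → κ → α → β → ℝ) :
    ∑ k, ∑ l, ∑ σ, ∑ ρ, t k l σ ρ = ∑ σ, ∑ ρ, ∑ k, ∑ l, t k l σ ρ :=
  calc ∑ k, ∑ l, ∑ σ, ∑ ρ, t k l σ ρ
      = ∑ k, ∑ σ, ∑ l, ∑ ρ, t k l σ ρ :=
        Finset.sum_congr rfl fun _ _ => Finset.sum_comm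
    _ = ∑ σ, ∑ k, ∑ l, ∑ ρ, t k l σ ρ := Finset.sum_comm
    _ = ∑ σ, ∑ k, ∑ ρ, ∑ l, t k l σ ρ :=
        Finset.sum_congr rfl fun _ _ => Finset.sum_congr rfl fun _ _ => Finset.sum_comm
    _ = ∑ σ, ∑ ρ, ∑ k, ∑ l, t k l σ ρ :=
        Finset.sum_congr rfl fun _ _ => Finset.sum_comm

lemma factor2 {ι κ : Type*} [Fintype ι] [Fintype κ] (p : ι → ℝ) (q : κ → ℝ) (c : ℝ) :
    (∑ k, p k) * (∑ l, q l) * c = ∑ k, ∑ l, p k * q l * c := by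
  rw [Finset.sum_mul_sum]
  simp only [Finset.sum_mul]

/-- Purely algebraic core of the cocycle identity. -/
lemma alg {m n : ℕ} (A B : Fin n → ℝ) (C D : Fin n → Fin m → ℝ) (E G : Fin m → Fin m → ℝ)
    (f g : Fin m → Fin m → ℝ) (h : Fin n → Fin n → ℝ) (c : ℝ) :
    (∑ μ, ∑ ν, (∑ σ, (∑ k, A k * C k σ) * E σ μ) * (∑ ρ, (∑ l, B l * D l ρ) * G ρ ν) * f μ ν) - c
    = (∑ k, ∑ l, A k * B l * ((∑ σ, ∑ ρ, C k σ * D l ρ * g σ ρ) - h k l))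
    + (∑ σ, ∑ ρ, (∑ k, A k * C k σ) * (∑ l, B l * D l ρ) * ((∑ μ, ∑ ν, E σ μ * G ρ ν * f μ ν) - g σ ρ))
    + ((∑ k, ∑ l, A k * B l * h k l) - c) := by
  have key1 : ∑ σ, ∑ ρ, (∑ k, A k * C k σ) * (∑ l, B l * D l ρ) * g σ ρ
      = ∑ k, ∑ l, A k * B l * (∑ σ, ∑ ρ, C k σ * D l ρ * g σ ρ) := by
    calc ∑ σ, ∑ ρ, (∑ k, A k * C k σ) * (∑ l, B l * D l ρ) * g σ ρ
        = ∑ σ, ∑ ρ, ∑ k, ∑ l, (A k * C k σ) * (B l * D l ρ) * g σ ρ :=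
          Finset.sum_congr rfl fun σ _ => Finset.sum_congr rfl fun ρ _ => factor2 _ _ _
      _ = ∑ k, ∑ l, ∑ σ, ∑ ρ, (A k * C k σ) * (B l * D l ρ) * g σ ρ := (swap4 _).symm
      _ = ∑ k, ∑ l, A k * B l * (∑ σ, ∑ ρ, C k σ * D l ρ * g σ ρ) := by
          refine Finset.sum_congr rfl fun k _ => Finset.sum_congr rfl fun l _ => ?_
          simp only [Finset.mul_sum]
          exact Finset.sum_congr rfl fun σ _ => Finset.sum_congr rfl fun ρ _ => by ring
  have key2 : ∑ μ, ∑ ν, (∑ σ, (∑ k, A k * C k σ) * E σ μ) * (∑ ρ, (∑ l, B l * D l ρ) * G ρ ν) * f μ ν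
      = ∑ σ, ∑ ρ, (∑ k, A k * C k σ) * (∑ l, B l * D l ρ) * (∑ μ, ∑ ν, E σ μ * G ρ ν * f μ ν) := by
    calc ∑ μ, ∑ ν, (∑ σ, (∑ k, A k * C k σ) * E σ μ) * (∑ ρ, (∑ l, B l * D l ρ) * G ρ ν) * f μ ν
        = ∑ μ, ∑ ν, ∑ σ, ∑ ρ, ((∑ k, A k * C k σ) * E σ μ) * ((∑ l, B l * D l ρ) * G ρ ν) * f μ ν :=
          Finset.sum_congr rfl fun μ _ => Finset.sum_congr rfl fun ν _ => factor2 _ _ _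
      _ = ∑ σ, ∑ ρ, ∑ μ, ∑ ν, ((∑ k, A k * C k σ) * E σ μ) * ((∑ l, B l * D l ρ) * G ρ ν) * f μ ν :=
          swap4 _
      _ = ∑ σ, ∑ ρ, (∑ k, A k * C k σ) * (∑ l, B l * D l ρ) * (∑ μ, ∑ ν, E σ μ * G ρ ν * f μ ν) := by
          refine Finset.sum_congr rfl fun σ _ => Finset.sum_congr rfl fun ρ _ => ?_
          conv_rhs => rw [Finset.mul_sum]
          refine Finset.sum_congr rfl fun μ _ => ?_
          conv_rhs => rw [Finset.mul_sum]
          exact Finset.sum_congr rfl fun ν _ => by ring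
  simp only [mul_sub, Finset.sum_sub_distrib]
  rw [key2, ← key1]
  ring

/-- Cocycle identity for the left-right action `F ↦ Y ∘ F ∘ X⁻¹` on jets of maps
`ℝᵐ → ℝⁿ`. -/
theorem jet_space_cocycle {m n : ℕ}
    (φm : Fin m → Fin m → (Fin m → ℝ) → (Fin m → ℝ) → ℝ)
    (φn : Fin n → Fin n → (Fin n → ℝ) → (Fin n → ℝ) → ℝ)
    (hφm : ∀ i j u v, φm i j u v = -φm j i v u)
    (hφn : ∀ i j u v, φn i j u v = -φn j i v u)
    (F : (Fin m → ℝ) → (Fin n → ℝ)) (X Xinv : (Fin m → ℝ) → (Fin m → ℝ))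
    (Y : (Fin n → ℝ) → (Fin n → ℝ))
    (hF : ContDiff ℝ (⊤ : ℕ∞) F) (hX : ContDiff ℝ (⊤ : ℕ∞) X) (hXinv : ContDiff ℝ (⊤ : ℕ∞) Xinv)
    (hY : ContDiff ℝ (⊤ : ℕ∞) Y)
    (hXl : ∀ u, X (Xinv u) = u) (hXr : ∀ u, Xinv (X u) = u) :
    ∀ (i j : Fin n) (u v : Fin m → ℝ),
      PiT φm φn (Y ∘ F ∘ Xinv) i j u v =
        (∑ k, ∑ l, jac Y i k (F (Xinv u)) * jac Y j l (F (Xinv v)) *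
          PiT φm φn F k l (Xinv u) (Xinv v)) +
        (∑ σ, ∑ ρ,
          (∑ k, jac Y i k (F (Xinv u)) * jac F k σ (Xinv u)) *
          (∑ l, jac Y j l (F (Xinv v)) * jac F l ρ (Xinv v)) *
          Omega φm Xinv σ ρ u v) +
        Omega φn Y i j (F (Xinv u)) (F (Xinv v)) := by
  intro i j u v
  have hFd : Differentiable ℝ F := hF.differentiable (by simp)
  have hXinvd : Differentiable ℝ Xinv := hXinv.differentiable (by simp)
  have hYd : Differentiable ℝ Y := hY.differentiable (by simp)
  have hjac : ∀ (i : Fin n) (μ : Fin m) (w : Fin m → ℝ),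
      jac (Y ∘ F ∘ Xinv) i μ w
        = ∑ σ, (∑ k, jac Y i k (F (Xinv w)) * jac F k σ (Xinv w)) * jac Xinv σ μ w := by
    intro i μ w
    have h1 : jac (Y ∘ F ∘ Xinv) i μ w = jac ((Y ∘ F) ∘ Xinv) i μ w := rfl
    rw [h1, jac_comp (Y ∘ F) Xinv (hYd.comp hFd) hXinvd]
    refine Finset.sum_congr rfl fun σ _ => ?_
    rw [jac_comp Y F hYd hFd]
  simp only [PiT, Omega, Function.comp_apply, hjac]
  exact alg (fun k => jac Y i k (F (Xinv u))) (fun l => jac Y j l (F (Xinv v)))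
    (fun k σ => jac F k σ (Xinv u)) (fun l ρ => jac F l ρ (Xinv v))
    (fun σ μ => jac Xinv σ μ u) (fun ρ ν => jac Xinv ρ ν v)
    (fun μ ν => φm μ ν u v) (fun σ ρ => φm σ ρ (Xinv u) (Xinv v))
    (fun k l => φn k l (F (Xinv u)) (F (Xinv v)))
    (φn i j (Y (F (Xinv u))) (Y (F (Xinv v))))
end

section
/- The functions φ^{ij}(u,v) = u^i − v^j (for i,j = 1,…,n) on R^n × R^n are skew-symmetric in the sense φ^{ij}(u,v) = −φ^{ji}(v,u) and solve the classical Yang–Baxter equation for W_n. -/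
open scoped BigOperators

lemma D1_coord_sub {n : ℕ} (i s : Fin n) (g : (Fin n → ℝ) → ℝ) (u v : Fin n → ℝ) :
    D1 (fun u v => u i - g v) s u v = if s = i then 1 else 0 := by
  have hderiv : fderiv ℝ (fun x : Fin n → ℝ => x i - g v) u = ContinuousLinearMap.proj i := by
    rw [fderiv_sub_const]
    exact (ContinuousLinearMap.proj (R := ℝ) (φ := fun _ : Fin n => ℝ) i).fderiv
  simp [D1, hderiv, Pi.single_apply, eq_comm]

/-- When `∂_{u^s} φ^{ij}(u,v) = δ_{si}`, each of the six sums in the CYBE collapses to one term. -/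
lemma CYBElhs_eq_cyclic_sum {n : ℕ} (φ : Fin n → Fin n → (Fin n → ℝ) → (Fin n → ℝ) → ℝ)
    (hφ : ∀ i j s u v, D1 (φ i j) s u v = if s = i then 1 else 0)
    (i j k : Fin n) (u v w : Fin n → ℝ) :
    CYBElhs φ i j k u v w = 2 * (φ i j u v + φ j k v w + φ k i w u) := by
  simp only [CYBElhs, hφ, mul_ite, mul_one, mul_zero, Finset.sum_add_distrib,
    Finset.sum_ite_eq', Finset.mem_univ, if_true]
  ring

/-- `φ^{ij}(u,v) = u^i − v^j` is skew-symmetric and solves the CYBE for `W_n`. -/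
theorem translation_r_matrix {n : ℕ} :
    let φ : Fin n → Fin n → (Fin n → ℝ) → (Fin n → ℝ) → ℝ := fun i j u v => u i - v j
    (∀ i j u v, φ i j u v = -φ j i v u) ∧
      (∀ (i j k : Fin n) (u v w : Fin n → ℝ), CYBElhs φ i j k u v w = 0) := by
  intro φ
  refine ⟨fun i j u v => by simp only [φ]; ring, fun i j k u v w => ?_⟩
  rw [CYBElhs_eq_cyclic_sum φ (fun i j s u v => D1_coord_sub i s (fun v => v j) u v)]
  simp only [φ]
  ring
end
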